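/- Fix a real number p > 0 and let ψ(t) = (1 + (t + √(t²+4t))/2)^{p/2} + (1 + (t − √(t²+4t))/2)^{p/2} for t ≥ 0. Then for all 0 ≤ t < 4, ψ(t) = Σ_{n≥0} λ_n tⁿ, where λ_n = (2/(2n)!) · ∏_{k=0}^{n−1} (p²/4 − k²) (so λ_0 = 2), the series converging absolutely. -/

import Mathlib

/-- The function `ψ(t) = (1 + (t + √(t²+4t))/2)^{p/2} + (1 + (t − √(t²+4t))/2)^{p/2}`. -/
noncomputable def psiFun (p : ℝ) (t : ℝ) : ℝ :=
  (1 + (t + Real.sqrt (t ^ 2 + 4 * t)) / 2) ^ (p / 2) +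
    (1 + (t - Real.sqrt (t ^ 2 + 4 * t)) / 2) ^ (p / 2)

/-- The coefficients `λ_n = (2/(2n)!) ∏_{k=0}^{n−1} (p²/4 − k²)`. -/
noncomputable def psiCoeff (p : ℝ) (n : ℕ) : ℝ :=
  (2 / Nat.factorial (2 * n)) * ∏ k ∈ Finset.range n, (p ^ 2 / 4 - (k : ℝ) ^ 2)

/-!
Substituting `t = 4 sinh² u` (`u ≥ 0`) turns `ψ(t)` into `2 cosh (p u)`, and `λ_n tⁿ` into
`2 c_{2n} z^{2n}` with `z = sinh u`, where `(m+1)(m+2) c_{m+2} = (p² − m²) c_m`, `c_0 = 1`,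
`c_1 = 0`. This recurrence keeps `c` bounded, so `f(z) = ∑ c_m z^m` converges for `|z| < 1`,
and it says exactly that `(1 + z²) f'' + z f' = p² f`. In the variable `u` this is
`H'' = p² H`, which `cosh (p u)` also solves with the same initial data `H(0) = 1`, `H'(0) = 0`;
uniqueness for this linear ODE gives `f(sinh u) = cosh (p u)`.
-/

open Set Real

section PowerSeries

variable {a : ℕ → ℝ} {C : ℝ}

/-- The `j`-th termwise derivative of `∑ a m * z ^ m`; the factor `m.descFactorial j` vanishes
for `m < j`, so the truncated exponent `m - j` does no harm. -/
noncomputable def powSeriesDeriv (a : ℕ → ℝ) (j : ℕ) (z : ℝ) : ℝ :=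
  ∑' m, a m * m.descFactorial j * z ^ (m - j)

lemma powSeriesDeriv_zero_left (a : ℕ → ℝ) (z : ℝ) :
    powSeriesDeriv a 0 z = ∑' m, a m * z ^ m := by
  simp [powSeriesDeriv]

lemma powSeriesDeriv_zero_right (a : ℕ → ℝ) (j : ℕ) :
    powSeriesDeriv a j 0 = a j * j.factorial := by
  rw [powSeriesDeriv, tsum_eq_single j]
  · simp [Nat.descFactorial_self]
  · intro m hm
    rcases lt_or_gt_of_ne hm with h | h
    · simp [Nat.descFactorial_eq_zero_iff_lt.2 h]
    · simp [zero_pow (Nat.sub_ne_zero_of_lt h)]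

lemma pow_mul_descFactorial_mul_pow_sub (z : ℝ) (m j : ℕ) :
    z ^ j * (m.descFactorial j * z ^ (m - j)) = m.descFactorial j * z ^ m := by
  rcases le_or_gt j m with h | h
  · rw [mul_left_comm, ← pow_add, Nat.add_sub_cancel' h]
  · simp [Nat.descFactorial_eq_zero_iff_lt.2 h]

lemma summable_natCast_pow_mul_pow_sub {r : ℝ} (hr0 : 0 < r) (hr1 : r < 1) (j : ℕ) :
    Summable fun m : ℕ => (m : ℝ) ^ j * r ^ (m - j) := by
  have hgeom : Summable fun m : ℕ => (m : ℝ) ^ j * r ^ m / r ^ j :=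
    (summable_pow_mul_geometric_of_norm_lt_one (R := ℝ) j
      (by rwa [Real.norm_of_nonneg hr0.le])).div_const _
  refine hgeom.of_nonneg_of_le (fun m => by positivity) fun m => ?_
  rw [mul_div_assoc]
  gcongr
  rw [le_div_iff₀ (pow_pos hr0 j), ← pow_add]
  exact pow_le_pow_of_le_one hr0.le hr1.le (by omega)

lemma norm_powSeriesDeriv_term_le (hC : ∀ m, |a m| ≤ C) (j m : ℕ) {r y : ℝ}
    (hy : |y| ≤ r) :
    ‖a m * m.descFactorial j * y ^ (m - j)‖ ≤ C * ((m : ℝ) ^ j * r ^ (m - j)) := by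
  rw [Real.norm_eq_abs, abs_mul, abs_mul, abs_pow, mul_assoc, Nat.abs_cast]
  gcongr
  · exact (abs_nonneg _).trans (hC 0)
  · exact hC m
  · exact_mod_cast Nat.descFactorial_le_pow m j

lemma summable_powSeriesDeriv (hC : ∀ m, |a m| ≤ C) (j : ℕ) {z : ℝ} (hz : |z| < 1) :
    Summable fun m => a m * m.descFactorial j * z ^ (m - j) := by
  obtain ⟨r, hzr, hr1⟩ := exists_between hz
  exact .of_norm_bounded ((summable_natCast_pow_mul_pow_sub ((abs_nonneg z).trans_lt hzr) hr1
    j).mul_left C) fun m => norm_powSeriesDeriv_term_le hC j m hzr.le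

lemma hasDerivAt_powSeriesDeriv (hC : ∀ m, |a m| ≤ C) (j : ℕ) {z : ℝ} (hz : |z| < 1) :
    HasDerivAt (powSeriesDeriv a j) (powSeriesDeriv a (j + 1) z) z := by
  obtain ⟨r, hzr, hr1⟩ := exists_between hz
  have hr0 : 0 < r := (abs_nonneg z).trans_lt hzr
  have hball : ∀ {y}, y ∈ Metric.ball (0 : ℝ) r → |y| ≤ r := fun hy => by
    simpa [Real.dist_eq] using (Metric.mem_ball.1 hy).le
  refine hasDerivAt_tsum_of_isPreconnected ((summable_natCast_pow_mul_pow_sub hr0 hr1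
      (j + 1)).mul_left C) Metric.isOpen_ball (convex_ball 0 r).isPreconnected
    (fun m y _ => ?_) (fun m y hy => norm_powSeriesDeriv_term_le hC (j + 1) m (hball hy))
    (Metric.mem_ball_self hr0) (summable_powSeriesDeriv hC j (by simp))
    (by simpa [Real.dist_eq] using hzr)
  refine ((hasDerivAt_pow (m - j) y).const_mul (a m * m.descFactorial j)).congr_deriv ?_
  rw [Nat.descFactorial_succ, Nat.sub_sub]
  push_cast
  ring

lemma powSeriesDeriv_ode {p : ℝ} (hC : ∀ m, |a m| ≤ C)
    (hrec : ∀ m : ℕ, ((m : ℝ) + 1) * (m + 2) * a (m + 2) = (p ^ 2 - m ^ 2) * a m)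
    {z : ℝ} (hz : |z| < 1) :
    (1 + z ^ 2) * powSeriesDeriv a 2 z + z * powSeriesDeriv a 1 z =
      p ^ 2 * powSeriesDeriv a 0 z := by
  set T : ℕ → ℕ → ℝ := fun j m => a m * m.descFactorial j * z ^ (m - j)
  have hsum : ∀ j, HasSum (T j) (powSeriesDeriv a j z) := fun j =>
    (summable_powSeriesDeriv hC j hz).hasSum
  have hshift : HasSum (fun m => T 2 (m + 2)) (powSeriesDeriv a 2 z) := by
    simpa [T, Finset.sum_range_succ] using (hasSum_nat_add_iff' 2).2 (hsum 2)
  have hterm : ∀ m, T 2 (m + 2) + z ^ 2 * T 2 m + z ^ 1 * T 1 m = p ^ 2 * T 0 m := by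
    intro m
    have h2 := pow_mul_descFactorial_mul_pow_sub z m 2
    have h1 := pow_mul_descFactorial_mul_pow_sub z m 1
    simp only [T, Nat.add_sub_cancel, Nat.sub_zero, Nat.descFactorial_zero]
    simp only [Nat.cast_descFactorial_two, Nat.descFactorial_one] at h1 h2 ⊢
    push_cast at h1 h2 ⊢
    linear_combination (z ^ m) * hrec m + a m * h2 + a m * h1
  have := (hshift.add ((hsum 2).mul_left (z ^ 2))).add ((hsum 1).mul_left (z ^ 1))
  rw [funext hterm] at this
  linear_combination this.unique ((hsum 0).mul_left (p ^ 2))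

end PowerSeries

noncomputable def coshArsinhCoeff (p : ℝ) : ℕ → ℝ
  | 0 => 1
  | 1 => 0
  | m + 2 => (p ^ 2 - m ^ 2) / ((m + 1) * (m + 2)) * coshArsinhCoeff p m

lemma coshArsinhCoeff_rec (p : ℝ) (m : ℕ) :
    ((m : ℝ) + 1) * (m + 2) * coshArsinhCoeff p (m + 2) =
      (p ^ 2 - m ^ 2) * coshArsinhCoeff p m := by
  rw [coshArsinhCoeff]
  field_simp

lemma coshArsinhCoeff_odd (p : ℝ) (n : ℕ) : coshArsinhCoeff p (2 * n + 1) = 0 := by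
  induction n with
  | zero => rfl
  | succ n ih => rw [show 2 * (n + 1) + 1 = 2 * n + 1 + 2 by ring, coshArsinhCoeff, ih, mul_zero]

lemma psiCoeff_succ (p : ℝ) (n : ℕ) :
    psiCoeff p (n + 1) * ((2 * n + 1) * (2 * n + 2)) = psiCoeff p n * (p ^ 2 / 4 - n ^ 2) := by
  have hfact :
      ((2 * (n + 1)).factorial : ℝ) = (2 * n + 2) * ((2 * n + 1) * (2 * n).factorial) := by
    rw [show 2 * (n + 1) = 2 * n + 1 + 1 by ring, Nat.factorial_succ, Nat.factorial_succ]
    push_cast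
    ring
  rw [psiCoeff, psiCoeff, Finset.prod_range_succ, hfact]
  field_simp

lemma two_mul_coshArsinhCoeff_even (p : ℝ) (n : ℕ) :
    2 * coshArsinhCoeff p (2 * n) = psiCoeff p n * 4 ^ n := by
  induction n with
  | zero => simp [coshArsinhCoeff, psiCoeff]
  | succ n ih =>
    have hrec := coshArsinhCoeff_rec p (2 * n)
    rw [show 2 * n + 2 = 2 * (n + 1) by ring] at hrec
    push_cast at hrec
    refine mul_right_cancel₀ (b := ((2 * n + 1) * (2 * n + 2) : ℝ)) (by positivity) ?_
    linear_combination 2 * hrec + (p ^ 2 - 4 * n ^ 2) * ih - 4 ^ (n + 1) * psiCoeff_succ p n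

lemma exists_bound_of_le_two_step {f : ℕ → ℝ} {N : ℕ}
    (h : ∀ m, N ≤ m → f (m + 2) ≤ f m) :
    ∃ C, ∀ m, f m ≤ C := by
  refine ⟨(Finset.range (N + 2)).sup' (by simp) f, fun m => ?_⟩
  induction m using Nat.strong_induction_on with
  | _ m ih =>
    rcases lt_or_ge m (N + 2) with hm | hm
    · exact Finset.le_sup' f (Finset.mem_range.2 hm)
    · obtain ⟨k, rfl⟩ := Nat.exists_eq_add_of_le' hm
      exact (h (k + N) (by omega)).trans (ih _ (by omega))

lemma abs_coshArsinhCoeff_le (p : ℝ) : ∃ C, ∀ m, |coshArsinhCoeff p m| ≤ C := by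
  refine exists_bound_of_le_two_step (N := ⌈|p|⌉₊) fun m hm => ?_
  have hp : |p| ≤ m := (Nat.le_ceil _).trans (by exact_mod_cast hm)
  have hpos : (0 : ℝ) < (m + 1) * (m + 2) := by positivity
  have hratio : |p ^ 2 - m ^ 2| ≤ (m + 1) * (m + 2) := by
    rw [abs_le]
    constructor <;> nlinarith [sq_abs p, abs_nonneg p]
  rw [coshArsinhCoeff, abs_mul, abs_div, abs_of_pos hpos]
  exact mul_le_of_le_one_left (abs_nonneg _) ((div_le_one hpos).2 hratio)

lemma psiFun_four_mul_sinh_sq (p : ℝ) {u : ℝ} (hu : 0 ≤ u) :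
    psiFun p (4 * sinh u ^ 2) = 2 * cosh (p * u) := by
  have hsqrt : √((4 * sinh u ^ 2) ^ 2 + 4 * (4 * sinh u ^ 2)) = 4 * sinh u * cosh u := by
    rw [← Real.sqrt_sq (by positivity : 0 ≤ 4 * sinh u * cosh u)]
    congr 1
    linear_combination -16 * sinh u ^ 2 * cosh_sq u
  have hplus : 1 + (4 * sinh u ^ 2 + 4 * sinh u * cosh u) / 2 = exp u ^ 2 := by
    rw [← cosh_add_sinh]
    linear_combination -cosh_sq u
  have hminus : 1 + (4 * sinh u ^ 2 - 4 * sinh u * cosh u) / 2 = exp (-u) ^ 2 := by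
    rw [← cosh_sub_sinh]
    linear_combination -cosh_sq u
  have hrpow : ∀ v, (exp v ^ 2) ^ (p / 2) = exp (p * v) := fun v => by
    rw [← exp_nat_mul, ← exp_mul]
    ring_nf
  rw [psiFun, hsqrt, hplus, hminus, hrpow, hrpow, cosh_eq]
  ring_nf

lemma hasSum_coshArsinhCoeff (p : ℝ) {z : ℝ} (hz0 : 0 ≤ z) (hz1 : z < 1) :
    HasSum (fun m => coshArsinhCoeff p m * z ^ m) (cosh (p * arsinh z)) := by
  obtain ⟨C, hC⟩ := abs_coshArsinhCoeff_le p
  have hsinh : ∀ u ∈ Icc 0 (arsinh z), |sinh u| < 1 := fun u hu => by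
    rw [abs_of_nonneg (sinh_nonneg_iff.2 hu.1)]
    exact (sinh_le_sinh.2 hu.2).trans_lt (by rwa [sinh_arsinh])
  set L : ℝ × ℝ →L[ℝ] ℝ × ℝ :=
    (ContinuousLinearMap.snd ℝ ℝ ℝ).prod (p ^ 2 • ContinuousLinearMap.fst ℝ ℝ ℝ)
  set F : ℝ → ℝ × ℝ := fun u => (powSeriesDeriv (coshArsinhCoeff p) 0 (sinh u),
    cosh u * powSeriesDeriv (coshArsinhCoeff p) 1 (sinh u))
  set G : ℝ → ℝ × ℝ := fun u => (cosh (p * u), p * sinh (p * u))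
  have hF : ∀ u ∈ Icc 0 (arsinh z), HasDerivAt F (L (F u)) u := fun u hu => by
    have h0 := (hasDerivAt_powSeriesDeriv hC 0 (hsinh u hu)).comp u (hasDerivAt_sinh u)
    have h1 := (hasDerivAt_cosh u).mul
      ((hasDerivAt_powSeriesDeriv hC 1 (hsinh u hu)).comp u (hasDerivAt_sinh u))
    refine (h0.prodMk h1).congr_deriv (Prod.ext (by simp [L, F, mul_comm]) ?_)
    have hode := powSeriesDeriv_ode hC (coshArsinhCoeff_rec p) (hsinh u hu)
    simp only [Function.comp_apply, Nat.reduceAdd, ContinuousLinearMap.prod_apply,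
      ContinuousLinearMap.coe_snd', smul_apply, ContinuousLinearMap.coe_fst', smul_eq_mul, L, F]
    linear_combination hode + powSeriesDeriv (coshArsinhCoeff p) 2 (sinh u) * cosh_sq u
  have hG : ∀ u, HasDerivAt G (L (G u)) u := fun u => by
    have h0 := (hasDerivAt_cosh (p * u)).comp u ((hasDerivAt_id u).const_mul p)
    have h1 := ((hasDerivAt_sinh (p * u)).comp u ((hasDerivAt_id u).const_mul p)).const_mul p
    refine (h0.prodMk h1).congr_deriv (Prod.ext (by simp [L, G]; ring) ?_)
    simp only [mul_one, ContinuousLinearMap.prod_apply, ContinuousLinearMap.coe_snd', smul_apply,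
      ContinuousLinearMap.coe_fst', smul_eq_mul, L, G]
    ring
  -- along `z = sinh u` the ODE of the series becomes `H'' = p ^ 2 * H`, solved by `cosh (p * u)`
  have hFG : EqOn F G (Icc 0 (arsinh z)) :=
    ODE_solution_unique (v := fun _ => L) (fun _ => L.lipschitz)
      (fun u hu => (hF u hu).continuousAt.continuousWithinAt)
      (fun u hu => (hF u (Ico_subset_Icc_self hu)).hasDerivWithinAt)
      (fun u _ => (hG u).continuousAt.continuousWithinAt)
      (fun u _ => (hG u).hasDerivWithinAt)
      (by simp [F, G, powSeriesDeriv_zero_right, coshArsinhCoeff])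
  have hend := congrArg Prod.fst (hFG (right_mem_Icc.2 (arsinh_nonneg_iff.2 hz0)))
  simp only [F, G, sinh_arsinh, powSeriesDeriv_zero_left] at hend
  rw [← hend]
  exact ((summable_powSeriesDeriv hC 0 (by rwa [abs_of_nonneg hz0])).congr fun m => by simp).hasSum

theorem psi_powerSeries_general (p : ℝ) (t : ℝ) (ht0 : 0 ≤ t) (ht4 : t < 4) :
    HasSum (fun n : ℕ => psiCoeff p n * t ^ n) (psiFun p t) ∧
      Summable (fun n : ℕ => |psiCoeff p n * t ^ n|) := by
  obtain ⟨z, hz⟩ : ∃ z, z = √t / 2 := ⟨_, rfl⟩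
  have hz0 : 0 ≤ z := by rw [hz]; positivity
  have hz1 : z < 1 := by
    have := (Real.sqrt_lt' two_pos).2 (by linarith : t < 2 ^ 2)
    linarith
  have ht : t = 4 * sinh (arsinh z) ^ 2 := by
    rw [sinh_arsinh, hz, div_pow, Real.sq_sqrt ht0]
    ring
  have hterm : ∀ n, psiCoeff p n * t ^ n = 2 * (coshArsinhCoeff p (2 * n) * z ^ (2 * n)) := by
    intro n
    rw [← mul_assoc, two_mul_coshArsinhCoeff_even, ht, sinh_arsinh, pow_mul]
    ring
  have hodd : ∀ m ∉ range (2 * ·), coshArsinhCoeff p m * z ^ m = 0 := by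
    intro m hm
    obtain ⟨n, rfl | rfl⟩ := Nat.even_or_odd' m
    · exact absurd ⟨n, rfl⟩ hm
    · rw [coshArsinhCoeff_odd, zero_mul]
  have hsum := hasSum_coshArsinhCoeff p hz0 hz1
  have heven := ((mul_right_injective₀ two_ne_zero).hasSum_iff hodd).2 hsum
  refine ⟨?_, ?_⟩
  · rw [funext hterm, ht, psiFun_four_mul_sinh_sq p (arsinh_nonneg_iff.2 hz0)]
    exact heven.mul_left 2
  · refine (heven.summable.abs.mul_left 2).congr fun n => ?_
    rw [hterm, abs_mul, abs_two]
    rfl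

/-- For `p > 0` and `0 ≤ t < 4`, `ψ(t) = Σ_{n ≥ 0} λ_n tⁿ`, the series converging
absolutely. -/
theorem psi_powerSeries (p : ℝ) (hp : 0 < p) (t : ℝ) (ht0 : 0 ≤ t) (ht4 : t < 4) :
    HasSum (fun n : ℕ => psiCoeff p n * t ^ n) (psiFun p t) ∧
      Summable (fun n : ℕ => |psiCoeff p n * t ^ n|) :=
  psi_powerSeries_general p t ht0 ht4
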